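/- Let k be a field of characteristic 0 and let A, B ∈ k((t)) be two Laurent series, each with at worst a simple pole, having the same coefficient of t^{-1}. Then there exists a unit u ∈ k[[t]]^× with u ≡ 1 (mod t) such that B = A + u'·u^{-1}. -/

import Mathlib

/-!
Since `A` and `B` have the same residue, `B - A` has no pole, i.e. it is a power series `c`.
With `∫c` the primitive of `c` without constant term, `u = exp (∫c)` satisfies `u' = c·u` and
`u(0) = 1`, so `u'·u⁻¹ = c = B - A`.
-/

/-- The formal derivative `d/dt` of a formal Laurent series. -/
noncomputable def lderiv {k : Type*} [Field k] (x : LaurentSeries k) : LaurentSeries k where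
  coeff j := ((j + 1 : ℤ) : k) * x.coeff (j + 1)
  isPWO_support' := by
    apply Set.IsPWO.mono (x.isPWO_support.image_of_monotone
      (f := fun a : ℤ => a - 1) (fun a b h => by simpa using h))
    intro j hj
    have : x.coeff (j + 1) ≠ 0 := fun h => hj (by simp [Function.mem_support] at hj ⊢; simp [h])
    exact ⟨j + 1, this, by ring⟩

open PowerSeries LaurentSeries

namespace PowerSeries

section Primitive

variable {k : Type*} [Field k]

noncomputable def primitive (f : k⟦X⟧) : k⟦X⟧ :=
  mk fun
    | 0 => 0
    | n + 1 => coeff n f / (n + 1)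

@[simp]
theorem constantCoeff_primitive (f : k⟦X⟧) : constantCoeff (primitive f) = 0 := by
  rw [← coeff_zero_eq_constantCoeff_apply, primitive, coeff_mk]

@[simp]
theorem derivative_primitive [CharZero k] (f : k⟦X⟧) : d⁄dX k (primitive f) = f := by
  ext n
  rw [coeff_derivative, primitive, coeff_mk]
  field_simp

end Primitive

section Exp

variable {A : Type*} [CommRing A] [Algebra ℚ A]

theorem derivative_exp_subst {g : A⟦X⟧} (hg : HasSubst g) :
    d⁄dX A ((exp A).subst g) = (exp A).subst g * d⁄dX A g := by
  rw [derivative_subst hg, derivative_exp]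

theorem constantCoeff_exp_subst {g : A⟦X⟧} (hg : constantCoeff g = 0) :
    constantCoeff ((exp A).subst g) = 1 := by
  rw [← coeff_zero_eq_constantCoeff_apply, coeff_subst' (HasSubst.of_constantCoeff_zero' hg),
    finsum_eq_single _ 0]
  · simp
  · intro d hd
    simp [coeff_zero_eq_constantCoeff_apply, hg, zero_pow hd]

end Exp

end PowerSeries

section Laurent

variable {k : Type*} [Field k]

theorem lderiv_coe (f : k⟦X⟧) : lderiv (f : k⸨X⸩) = d⁄dX k f := by
  ext j
  show ((j + 1 : ℤ) : k) * (f : k⸨X⸩).coeff (j + 1) = _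
  rw [coeff_coe, coeff_coe]
  rcases lt_trichotomy j (-1) with hj | rfl | hj
  · rw [if_pos (by omega), if_pos (by omega), mul_zero]
  · simp
  · obtain ⟨n, rfl⟩ := Int.eq_ofNat_of_zero_le (by omega : 0 ≤ j)
    rw [if_neg (by omega), if_neg (by omega), coeff_derivative,
      show (n : ℤ) + 1 = ((n + 1 : ℕ) : ℤ) by push_cast; rfl, Int.natAbs_natCast,
      Int.natAbs_natCast]
    push_cast
    ring

theorem exists_coe_eq_of_coeff_neg {x : k⸨X⸩} (hx : ∀ j < 0, x.coeff j = 0) :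
    ∃ f : k⟦X⟧, (f : k⸨X⸩) = x := by
  refine ⟨mk fun n => x.coeff n, ?_⟩
  ext j
  rw [coeff_coe]
  split_ifs with hj
  · exact (hx j hj).symm
  · rw [coeff_mk, Int.natAbs_of_nonneg (not_lt.mp hj)]

end Laurent

/-- Two Laurent series with at worst a simple pole and the same residue are gauge
equivalent by a unit `u` of `k⟦t⟧` with `u ≡ 1 (mod t)`: `B = A + u'·u⁻¹`. -/
theorem stmt_11 {k : Type*} [Field k] [CharZero k] (A B : LaurentSeries k)
    (hA : ∀ j : ℤ, j < -1 → A.coeff j = 0)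
    (hB : ∀ j : ℤ, j < -1 → B.coeff j = 0)
    (hres : A.coeff (-1) = B.coeff (-1)) :
    ∃ u : LaurentSeries k, IsUnit u ∧ (∀ j : ℤ, j < 0 → u.coeff j = 0) ∧ u.coeff 0 = 1 ∧
      B = A + lderiv u * u⁻¹ := by
  obtain ⟨c, hc⟩ : ∃ c : k⟦X⟧, (c : k⸨X⸩) = B - A := by
    refine exists_coe_eq_of_coeff_neg fun j hj => ?_
    rcases (by omega : j < -1 ∨ j = -1) with hj | rfl
    · simp [hA j hj, hB j hj]
    · simp [hres]
  set u : k⟦X⟧ := (exp k).subst (primitive c)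
  have hu0 : constantCoeff u = 1 := constantCoeff_exp_subst (constantCoeff_primitive c)
  have hu' : d⁄dX k u = u * c := by
    rw [derivative_exp_subst (HasSubst.of_constantCoeff_zero' (constantCoeff_primitive c)),
      derivative_primitive]
  have hcoeff0 : (u : k⸨X⸩).coeff 0 = 1 := by
    rw [← hu0, ← coeff_zero_eq_constantCoeff_apply, ← coeff_coe_powerSeries, Nat.cast_zero]
  have hne : (u : k⸨X⸩) ≠ 0 := fun h => by simp [h] at hcoeff0
  refine ⟨u, isUnit_iff_ne_zero.mpr hne, fun j hj => by rw [coeff_coe, if_pos hj], hcoeff0, ?_⟩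
  rw [lderiv_coe, hu', coe_mul, hc, mul_comm, ← mul_assoc, inv_mul_cancel₀ hne, one_mul]
  ring
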